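/- For all α ∈ (0,1)∪(1,∞) and β ∈ (0,∞), the two-parameter Rényi conditional entropy is non-negative: H̃_{α,β}(X|Y) ≥ 0. -/
import Mathlib


open scoped BigOperators

noncomputable section

variable {𝓧 𝓨 : Type*} [Fintype 𝓧] [Fintype 𝓨]

/-- Marginal distribution of the second component. -/
def pY (P : 𝓧 × 𝓨 → ℝ) (y : 𝓨) : ℝ := ∑ x, P (x, y)

/-- Conditional distribution `P_{X|Y}(x|y)`. -/
def pCond (P : 𝓧 × 𝓨 → ℝ) (x : 𝓧) (y : 𝓨) : ℝ := P (x, y) / pY P y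

/-- Two-parameter Rényi conditional entropy `H̃_{α,β}(X|Y)`. -/
def Htilde (P : 𝓧 × 𝓨 → ℝ) (α β : ℝ) : ℝ :=
  α / (β * (1 - α)) *
    Real.logb 2 (∑ y, if 0 < pY P y then
      pY P y * (∑ x, pCond P x y ^ α) ^ (β / α) else 0)

lemma pY_nonneg (P : 𝓧 × 𝓨 → ℝ) (hP : ∀ p, 0 ≤ P p) (y : 𝓨) : 0 ≤ pY P y :=
  Finset.sum_nonneg fun _ _ => hP _

lemma pY_sum (P : 𝓧 × 𝓨 → ℝ) (hPsum : ∑ p, P p = 1) : ∑ y, pY P y = 1 := by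
  rw [← hPsum, Fintype.sum_prod_type_right]
  rfl

lemma pCond_nonneg (P : 𝓧 × 𝓨 → ℝ) (hP : ∀ p, 0 ≤ P p) (x : 𝓧) (y : 𝓨)
    (hy : 0 < pY P y) : 0 ≤ pCond P x y :=
  div_nonneg (hP _) hy.le

lemma pCond_sum (P : 𝓧 × 𝓨 → ℝ) (x : 𝓧) (y : 𝓨) (hy : 0 < pY P y) :
    ∑ x, pCond P x y = 1 := by
  unfold pCond
  rw [← Finset.sum_div]
  exact div_self hy.ne'

lemma pCond_le_one (P : 𝓧 × 𝓨 → ℝ) (hP : ∀ p, 0 ≤ P p) (x : 𝓧) (y : 𝓨)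
    (hy : 0 < pY P y) : pCond P x y ≤ 1 := by
  rw [← pCond_sum P x y hy]
  exact Finset.single_le_sum (fun i _ => pCond_nonneg P hP i y hy) (Finset.mem_univ x)

/-- non-negativity of the two-parameter Rényi conditional entropy. -/
theorem Htilde_nonneg
    [Nonempty 𝓧] [Nonempty 𝓨]
    (P : 𝓧 × 𝓨 → ℝ) (hP : ∀ p, 0 ≤ P p) (hPsum : ∑ p, P p = 1)
    (α β : ℝ) (hα : 0 < α) (hα1 : α ≠ 1) (hβ : 0 < β) :
    0 ≤ Htilde P α β := by
  unfold Htilde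
  set S : ℝ := ∑ y, if 0 < pY P y then
      pY P y * (∑ x, pCond P x y ^ α) ^ (β / α) else 0 with hS
  have hβα : 0 ≤ β / α := le_of_lt (div_pos hβ hα)
  rcases lt_or_gt_of_ne hα1 with hlt | hgt
  · -- α < 1 : S ≥ 1, coefficient ≥ 0
    have hT : ∀ y, 0 < pY P y → (1 : ℝ) ≤ ∑ x, pCond P x y ^ α := by
      intro y hy
      calc (1 : ℝ) = ∑ x, pCond P x y := (pCond_sum P (Classical.arbitrary 𝓧) y hy).symm
        _ ≤ ∑ x, pCond P x y ^ α := by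
            apply Finset.sum_le_sum
            intro x _
            rcases eq_or_lt_of_le (pCond_nonneg P hP x y hy) with h0 | h0
            · rw [← h0, Real.zero_rpow hα.ne']
            · calc pCond P x y = pCond P x y ^ (1 : ℝ) := (Real.rpow_one _).symm
                _ ≤ pCond P x y ^ α :=
                  Real.rpow_le_rpow_of_exponent_ge h0
                    (pCond_le_one P hP x y hy) hlt.le
    have hS1 : (1 : ℝ) ≤ S := by
      rw [hS, ← pY_sum P hPsum]
      apply Finset.sum_le_sum
      intro y _
      by_cases hy : 0 < pY P y
      · rw [if_pos hy]
        nth_rewrite 1 [← mul_one (pY P y)]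
        exact mul_le_mul_of_nonneg_left
          (Real.one_le_rpow (hT y hy) hβα) hy.le
      · rw [if_neg hy]
        exact not_lt.mp hy
    have hcoef : 0 ≤ α / (β * (1 - α)) :=
      le_of_lt (div_pos hα (mul_pos hβ (by linarith)))
    exact mul_nonneg hcoef (Real.logb_nonneg one_lt_two hS1)
  · -- α > 1 : S ≤ 1, coefficient ≤ 0
    have hT : ∀ y, 0 < pY P y → (∑ x, pCond P x y ^ α) ≤ 1 := by
      intro y hy
      calc (∑ x, pCond P x y ^ α) ≤ ∑ x, pCond P x y := by
            apply Finset.sum_le_sum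
            intro x _
            rcases eq_or_lt_of_le (pCond_nonneg P hP x y hy) with h0 | h0
            · rw [← h0, Real.zero_rpow hα.ne']
            · calc pCond P x y ^ α ≤ pCond P x y ^ (1 : ℝ) :=
                  Real.rpow_le_rpow_of_exponent_ge h0
                    (pCond_le_one P hP x y hy) hgt.le
                _ = pCond P x y := Real.rpow_one _
        _ = 1 := pCond_sum P (Classical.arbitrary 𝓧) y hy
    have hTnn : ∀ y, 0 ≤ ∑ x, pCond P x y ^ α := by
      intro y
      apply Finset.sum_nonneg
      intro x _
      exact Real.rpow_nonneg (by
        by_cases hy : 0 < pY P y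
        · exact pCond_nonneg P hP x y hy
        · simp only [pCond]
          have : pY P y = 0 := le_antisymm (not_lt.mp hy) (pY_nonneg P hP y)
          rw [this, div_zero]) _
    have hS1 : S ≤ 1 := by
      rw [hS, ← pY_sum P hPsum]
      apply Finset.sum_le_sum
      intro y _
      by_cases hy : 0 < pY P y
      · rw [if_pos hy]
        nth_rewrite 2 [← mul_one (pY P y)]
        exact mul_le_mul_of_nonneg_left
          (Real.rpow_le_one (hTnn y) (hT y hy) hβα) hy.le
      · rw [if_neg hy]; exact pY_nonneg P hP y
    have hS0 : 0 ≤ S := by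
      apply Finset.sum_nonneg
      intro y _
      by_cases hy : 0 < pY P y
      · rw [if_pos hy]
        exact mul_nonneg hy.le (Real.rpow_nonneg (hTnn y) _)
      · rw [if_neg hy]
    have hcoef : α / (β * (1 - α)) ≤ 0 := by
      apply div_nonpos_of_nonneg_of_nonpos hα.le
      exact mul_nonpos_of_nonneg_of_nonpos hβ.le (by linarith)
    have hlog : Real.logb 2 S ≤ 0 := Real.logb_nonpos one_lt_two hS0 hS1
    nlinarith
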